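/- For any finite directed flow network G with k terminals, there exists a flow network H with at most 2^(2^k − 2) vertices, containing the same k terminals, such that for every partition of the terminal set into two nonempty parts S and T, the minimum cut value (S ↛ T) in H equals that in G; consequently H realizes exactly the same external flows as G. -/

import Mathlib

open Finset

/-- Capacity of the cut determined by vertex set `A`: total capacity of edges leaving `A`. -/
def cutCap {V : Type} [Fintype V] [DecidableEq V] (c : V → V → ℝ) (A : Finset V) : ℝ :=
  ∑ u ∈ A, ∑ v ∈ Aᶜ, c u v

/-- Minimum capacity of a cut with all of `S` on the source side and all of `T` on the sink side. -/
noncomputable def minCut {V : Type} [Fintype V] [DecidableEq V] (c : V → V → ℝ) (S T : Finset V) : ℝ :=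
  sInf {x : ℝ | ∃ A : Finset V, S ⊆ A ∧ Disjoint T A ∧ x = cutCap c A}

/-- Net outflow of `f` at vertex `v`. -/
def netOut {V : Type} [Fintype V] (f : V → V → ℝ) (v : V) : ℝ :=
  (∑ w, f v w) - ∑ w, f w v

/-- `f` is an external flow in the network with capacities `c`, terminals `q` and
terminal net-outflow values `x`. -/
def IsExtFlow {V : Type} [Fintype V] {k : ℕ} (c f : V → V → ℝ) (q : Fin k → V)
    (x : Fin k → ℝ) : Prop :=
  (∀ u v, 0 ≤ f u v ∧ f u v ≤ c u v) ∧
  (∀ v, (∀ i, q i ≠ v) → netOut f v = 0) ∧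
  (∀ i, netOut f (q i) = x i)

/-!
Fix a minimum `S ↛ Sᶜ` cut `A_S` of `G` for every proper nonempty set `S` of terminals and
contract the fibres of the map `v ↦ (v ∈ A_S)_S`. Every cut of the contracted network pulls back
to a cut of `G` of the same capacity, and every `A_S` is a union of fibres, hence survives the
contraction; so the terminal min-cut values agree.

By Gale's feasibility theorem an external flow `x` is realizable iff `∑ x = 0` and
`∑_{i ∈ S} x_i ≤ mincut (S ↛ Sᶜ)` for every proper nonempty `S`, so the two networks realize the
same external flows. Gale's theorem is proved by compactness: take a capacity-respecting `f`
minimizing the unmet demand `∑ max (y - netOut f) 0`. If a vertex `s` has unmet demand, the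
vertices reachable from `s` in the residual graph of `f` either include one with surplus, and
pushing a little flow along a residual path lowers the unmet demand, or form a saturated cut whose
capacity is exceeded by the demand inside it.
-/

open Filter Topology

lemma eventually_add_mul_mem_Icc {a b lo hi : ℝ} (ha : a ∈ Set.Icc lo hi)
    (hpos : 0 < b → a < hi) (hneg : b < 0 → lo < a) :
    ∀ᶠ δ in 𝓝[>] (0 : ℝ), a + δ * b ∈ Set.Icc lo hi := by
  have hlim : Tendsto (fun δ : ℝ => a + δ * b) (𝓝[>] 0) (𝓝 a) :=
    tendsto_nhdsWithin_of_tendsto_nhds (by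
      simpa using ((continuous_mul_const b).const_add a).tendsto 0)
  rcases lt_trichotomy b 0 with hb | rfl | hb
  · filter_upwards [hlim.eventually_const_lt (hneg hb), self_mem_nhdsWithin] with δ hlo hδ
    exact ⟨hlo.le, by nlinarith [ha.2, mul_neg_of_pos_of_neg (Set.mem_Ioi.mp hδ) hb]⟩
  · exact Eventually.of_forall fun δ => by simpa using ha
  · filter_upwards [hlim.eventually_lt_const (hpos hb), self_mem_nhdsWithin] with δ hhi hδ
    exact ⟨by nlinarith [ha.1, mul_pos (Set.mem_Ioi.mp hδ) hb], hhi.le⟩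

section Feasible

variable {V : Type}

def IsFeasible (c f : V → V → ℝ) : Prop :=
  ∀ u v, 0 ≤ f u v ∧ f u v ≤ c u v

lemma isCompact_setOf_isFeasible (c : V → V → ℝ) : IsCompact {f | IsFeasible c f} := by
  have hpi : {f | IsFeasible c f} =
      Set.univ.pi fun u => Set.univ.pi fun v => Set.Icc 0 (c u v) := by
    ext f
    simp only [IsFeasible, Set.mem_ofPred_eq, Set.mem_pi, Set.mem_univ, Set.mem_Icc, true_implies]
  rw [hpi]
  exact isCompact_univ_pi fun u => isCompact_univ_pi fun v => isCompact_Icc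

def ResidualAdj (c f : V → V → ℝ) (u v : V) : Prop := f u v < c u v ∨ 0 < f v u

def IsResidualDir (c f g : V → V → ℝ) : Prop :=
  ∀ u v, (0 < g u v → f u v < c u v) ∧ (g u v < 0 → 0 < f u v)

variable {c f : V → V → ℝ}

lemma IsResidualDir.add {g h : V → V → ℝ} (hg : IsResidualDir c f g)
    (hh : IsResidualDir c f h) :
    IsResidualDir c f (g + h) := by
  intro u v
  constructor <;> intro huv
  · by_cases hpos : 0 < g u v
    · exact (hg u v).1 hpos
    · exact (hh u v).1 (by simp only [Pi.add_apply] at huv; linarith)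
  · by_cases hneg : g u v < 0
    · exact (hg u v).2 hneg
    · exact (hh u v).2 (by simp only [Pi.add_apply] at huv; linarith)

lemma isResidualDir_single [DecidableEq V] {u v : V} (h : f u v < c u v) :
    IsResidualDir c f (Pi.single u (Pi.single v 1)) := by
  intro x y
  by_cases hxy : x = u ∧ y = v
  · obtain ⟨rfl, rfl⟩ := hxy
    simpa using h
  · constructor <;> intro hne <;> simp_all [Pi.single_apply, ite_apply]

lemma isResidualDir_neg_single [DecidableEq V] {u v : V} (h : 0 < f u v) :
    IsResidualDir c f (-Pi.single u (Pi.single v 1)) := by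
  intro x y
  by_cases hxy : x = u ∧ y = v
  · obtain ⟨rfl, rfl⟩ := hxy
    simpa using h
  · constructor <;> intro hne <;> simp_all [Pi.single_apply, ite_apply]

lemma IsFeasible.eventually_add_smul [Finite V] {g : V → V → ℝ} (hf : IsFeasible c f)
    (hg : IsResidualDir c f g) :
    ∀ᶠ δ in 𝓝[>] (0 : ℝ), IsFeasible c (f + δ • g) := by
  simp only [IsFeasible, eventually_all]
  intro u v
  exact eventually_add_mul_mem_Icc (hf u v) (hg u v).1 (hg u v).2

end Feasible

section NetOut

variable {V : Type} [Fintype V] {c f : V → V → ℝ}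

lemma continuous_netOut (v : V) : Continuous fun f : V → V → ℝ => netOut f v := by
  unfold netOut
  fun_prop

lemma netOut_add (f g : V → V → ℝ) : netOut (f + g) = netOut f + netOut g := by
  ext v
  simp only [netOut, Pi.add_apply, Finset.sum_add_distrib]
  ring

lemma netOut_smul (δ : ℝ) (f : V → V → ℝ) : netOut (δ • f) = δ • netOut f := by
  ext v
  simp only [netOut, Pi.smul_apply, smul_eq_mul, ← Finset.mul_sum, mul_sub]

lemma netOut_neg (f : V → V → ℝ) : netOut (-f) = -netOut f := by
  simpa using netOut_smul (-1) f

lemma netOut_single [DecidableEq V] (u v : V) :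
    netOut (Pi.single u (Pi.single v 1)) = Pi.single u 1 - Pi.single v 1 := by
  ext w
  simp [netOut, Pi.single_apply, ite_apply, Finset.sum_ite_eq']

lemma sum_netOut (f : V → V → ℝ) : ∑ v, netOut f v = 0 := by
  simp only [netOut, Finset.sum_sub_distrib]
  rw [Finset.sum_comm, sub_self]

lemma sum_netOut_eq_sum_sum_compl [DecidableEq V] (f : V → V → ℝ) (A : Finset V) :
    ∑ u ∈ A, netOut f u = ∑ u ∈ A, ∑ v ∈ Aᶜ, (f u v - f v u) := by
  have hA : ∑ u ∈ A, ∑ v ∈ A, f u v = ∑ u ∈ A, ∑ v ∈ A, f v u := Finset.sum_comm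
  simp only [netOut, ← Finset.sum_add_sum_compl A, Finset.sum_sub_distrib, Finset.sum_add_distrib]
  linarith

lemma sum_netOut_le_cutCap [DecidableEq V] (hf : IsFeasible c f)
    (A : Finset V) : ∑ u ∈ A, netOut f u ≤ cutCap c A := by
  rw [sum_netOut_eq_sum_sum_compl, cutCap]
  gcongr with u _ v _
  linarith [(hf u v).2, (hf v u).1]

lemma cutCap_nonneg [DecidableEq V] (hc : ∀ u v, 0 ≤ c u v) (A : Finset V) :
    0 ≤ cutCap c A :=
  Finset.sum_nonneg fun u _ => Finset.sum_nonneg fun v _ => hc u v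

lemma exists_isResidualDir_of_reflTransGen [DecidableEq V] {s t : V}
    (hst : Relation.ReflTransGen (ResidualAdj c f) s t) :
    ∃ g, IsResidualDir c f g ∧ netOut g = Pi.single s 1 - Pi.single t 1 := by
  induction hst with
  | refl => exact ⟨0, fun u v => by simp, by ext; simp [netOut]⟩
  | @tail b v _ hbv ih =>
    obtain ⟨g, hg, hgnet⟩ := ih
    rcases hbv with hlt | hpos
    · refine ⟨g + Pi.single b (Pi.single v 1), hg.add (isResidualDir_single hlt), ?_⟩
      rw [netOut_add, hgnet, netOut_single]
      abel
    · refine ⟨g + -Pi.single v (Pi.single b 1), hg.add (isResidualDir_neg_single hpos), ?_⟩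
      rw [netOut_add, hgnet, netOut_neg, netOut_single]
      abel

lemma IsFeasible.sum_netOut_eq_cutCap [DecidableEq V] (hf : IsFeasible c f) {A : Finset V}
    (hA : ∀ u ∈ A, ∀ v ∉ A, ¬ResidualAdj c f u v) :
    ∑ u ∈ A, netOut f u = cutCap c A := by
  rw [sum_netOut_eq_sum_sum_compl, cutCap]
  refine Finset.sum_congr rfl fun u hu => Finset.sum_congr rfl fun v hv => ?_
  have huv := hA u hu v (Finset.mem_compl.mp hv)
  simp only [ResidualAdj, not_or, not_lt] at huv
  linarith [hf u v, hf v u]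

end NetOut

section Gale

variable {V : Type} [Fintype V] {c f : V → V → ℝ} {y : V → ℝ}

def deficit (y : V → ℝ) (f : V → V → ℝ) : ℝ := ∑ v, max (y v - netOut f v) 0

lemma continuous_deficit (y : V → ℝ) : Continuous (deficit y) := by
  unfold deficit
  have hnet := continuous_netOut (V := V)
  fun_prop

variable [DecidableEq V]

lemma deficit_add_smul_lt {g : V → V → ℝ} {s t : V} {δ : ℝ} (hs : netOut f s < y s)
    (ht : y t < netOut f t) (hδ : 0 < δ) (hδt : δ ≤ netOut f t - y t)
    (hg : netOut g = Pi.single s 1 - Pi.single t 1) :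
    deficit y (f + δ • g) < deficit y f := by
  have hst : s ≠ t := by rintro rfl; linarith
  have hnet : ∀ v, netOut (f + δ • g) v =
      netOut f v + δ * ((Pi.single s 1 - Pi.single t 1 : V → ℝ) v) := by
    simp [netOut_add, netOut_smul, hg]
  apply Finset.sum_lt_sum
  · intro v _
    rw [hnet]
    rcases eq_or_ne v s with rfl | hvs
    · simp only [Pi.sub_apply, Pi.single_eq_same, Pi.single_eq_of_ne hst]
      exact max_le_max (by linarith) le_rfl
    · rcases eq_or_ne v t with rfl | hvt
      · simp only [Pi.sub_apply, Pi.single_eq_same, Pi.single_eq_of_ne hvs]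
        exact (max_le (by linarith) le_rfl).trans (le_max_right _ _)
      · simp [hvs, hvt]
  · refine ⟨s, Finset.mem_univ s, ?_⟩
    rw [hnet, Pi.sub_apply, Pi.single_eq_same, Pi.single_eq_of_ne hst]
    exact max_lt (lt_max_of_lt_left (by linarith)) (lt_max_of_lt_left (by linarith))

lemma IsFeasible.exists_deficit_lt (hf : IsFeasible c f) {s t : V}
    (hst : Relation.ReflTransGen (ResidualAdj c f) s t) (hs : netOut f s < y s)
    (ht : y t < netOut f t) : ∃ f', IsFeasible c f' ∧ deficit y f' < deficit y f := by
  obtain ⟨g, hg, hgnet⟩ := exists_isResidualDir_of_reflTransGen hst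
  obtain ⟨δ, hfeas, hδ⟩ :=
    ((hf.eventually_add_smul hg).and (Ioo_mem_nhdsGT (sub_pos.mpr ht))).exists
  exact ⟨_, hfeas, deficit_add_smul_lt hs ht hδ.1 hδ.2.le hgnet⟩

lemma IsFeasible.exists_reflTransGen_lt_netOut (hf : IsFeasible c f)
    (hcut : ∀ A : Finset V, ∑ v ∈ A, y v ≤ cutCap c A) {s : V} (hs : netOut f s < y s) :
    ∃ t, Relation.ReflTransGen (ResidualAdj c f) s t ∧ y t < netOut f t := by
  classical
  by_contra! h
  set A := Finset.univ.filter (Relation.ReflTransGen (ResidualAdj c f) s)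
  have hclosed : ∀ u ∈ A, ∀ v ∉ A, ¬ResidualAdj c f u v := by
    intro u hu v hv huv
    simp only [A, Finset.mem_filter, Finset.mem_univ, true_and] at hu hv
    exact hv (hu.tail huv)
  have hlt : ∑ v ∈ A, netOut f v < ∑ v ∈ A, y v :=
    Finset.sum_lt_sum (fun v hv => h v (by simpa [A] using hv))
      ⟨s, by simp [A, Relation.ReflTransGen.refl], hs⟩
  linarith [hcut A, hf.sum_netOut_eq_cutCap hclosed]

-- Gale's feasibility theorem.
theorem exists_isFeasible_netOut_eq (hc : ∀ u v, 0 ≤ c u v) (hy : ∑ v, y v = 0)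
    (hcut : ∀ A : Finset V, ∑ v ∈ A, y v ≤ cutCap c A) :
    ∃ f, IsFeasible c f ∧ netOut f = y := by
  obtain ⟨f, hf, hmin⟩ := (isCompact_setOf_isFeasible c).exists_isMinOn
    ⟨0, fun u v => ⟨le_rfl, hc u v⟩⟩ (continuous_deficit y).continuousOn
  have hle : ∀ v, y v ≤ netOut f v := by
    by_contra! ⟨s, hs⟩
    obtain ⟨t, hst, ht⟩ := hf.exists_reflTransGen_lt_netOut hcut hs
    obtain ⟨f', hf', hlt⟩ := hf.exists_deficit_lt hst hs ht
    exact (hmin hf').not_gt hlt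
  have hsum : ∑ v, y v = ∑ v, netOut f v := by rw [hy, sum_netOut]
  exact ⟨f, hf, funext fun v =>
    ((Finset.sum_eq_sum_iff_of_le fun v _ => hle v).mp hsum v (Finset.mem_univ v)).symm⟩

end Gale

section MinCut

variable {V : Type} [Fintype V] [DecidableEq V] (c : V → V → ℝ) {S T : Finset V}

lemma finite_setOf_cutCap (S T : Finset V) :
    {x : ℝ | ∃ A : Finset V, S ⊆ A ∧ Disjoint T A ∧ x = cutCap c A}.Finite :=
  (Set.finite_range (cutCap c)).subset fun _ ⟨A, _, _, hx⟩ => ⟨A, hx.symm⟩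

lemma minCut_le_cutCap {A : Finset V} (hSA : S ⊆ A) (hTA : Disjoint T A) :
    minCut c S T ≤ cutCap c A :=
  csInf_le (finite_setOf_cutCap c S T).bddBelow ⟨A, hSA, hTA, rfl⟩

lemma le_minCut (hTS : Disjoint T S) {b : ℝ}
    (h : ∀ A : Finset V, S ⊆ A → Disjoint T A → b ≤ cutCap c A) : b ≤ minCut c S T :=
  le_csInf ⟨_, S, subset_rfl, hTS, rfl⟩ fun _ ⟨A, hSA, hTA, hx⟩ => hx ▸ h A hSA hTA

lemma exists_cutCap_eq_minCut (hTS : Disjoint T S) :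
    ∃ A : Finset V, S ⊆ A ∧ Disjoint T A ∧ cutCap c A = minCut c S T := by
  obtain ⟨A, hSA, hTA, hA⟩ : minCut c S T ∈ _ :=
    Set.Nonempty.csInf_mem ⟨_, S, subset_rfl, hTS, rfl⟩ (finite_setOf_cutCap c S T)
  exact ⟨A, hSA, hTA, hA.symm⟩

end MinCut

section Contraction

variable {V W : Type} [Fintype V] [DecidableEq W] (φ : V → W) (c : V → V → ℝ)

def mapCap : W → W → ℝ := fun a b => ∑ u with φ u = a, ∑ v with φ v = b, c u v

variable {c}

lemma mapCap_nonneg (hc : ∀ u v, 0 ≤ c u v) (a b : W) : 0 ≤ mapCap φ c a b :=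
  Finset.sum_nonneg fun u _ => Finset.sum_nonneg fun v _ => hc u v

variable (c)

lemma cutCap_mapCap [Fintype W] [DecidableEq V] (B : Finset W) :
    cutCap (mapCap φ c) B = cutCap c {v | φ v ∈ B} := by
  have hcompl :
      (Finset.univ.filter fun v => φ v ∈ B)ᶜ = Finset.univ.filter fun v => φ v ∈ Bᶜ := by
    ext v
    simp
  simp only [cutCap, mapCap]
  rw [hcompl, ← Finset.sum_fiberwise_eq_sum_filter]
  refine Finset.sum_congr rfl fun a _ => ?_
  rw [Finset.sum_comm]
  exact Finset.sum_congr rfl fun u _ => Finset.sum_fiberwise_eq_sum_filter _ _ _ _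

lemma minCut_mapCap_image [Fintype W] [DecidableEq V] {X Y A : Finset V} (hXA : X ⊆ A)
    (hYA : Disjoint Y A) (hA : cutCap c A = minCut c X Y)
    (hsat : ∀ u v, φ u = φ v → u ∈ A → v ∈ A) :
    minCut (mapCap φ c) (X.image φ) (Y.image φ) = minCut c X Y := by
  have hpre : ({v | φ v ∈ A.image φ} : Finset V) = A := by
    ext v
    simp only [Finset.mem_filter, Finset.mem_univ, true_and, Finset.mem_image]
    exact ⟨fun ⟨u, hu, huv⟩ => hsat u v huv hu, fun hv => ⟨v, hv, rfl⟩⟩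
  have hdisj : Disjoint (Y.image φ) (A.image φ) := by
    simp only [Finset.disjoint_left, Finset.mem_image, not_exists, not_and]
    rintro _ ⟨y, hy, rfl⟩ a ha hay
    exact Finset.disjoint_left.mp hYA hy (hsat a y hay ha)
  apply le_antisymm
  · calc minCut (mapCap φ c) (X.image φ) (Y.image φ)
        ≤ cutCap (mapCap φ c) (A.image φ) :=
          minCut_le_cutCap _ (Finset.image_subset_image hXA) hdisj
      _ = minCut c X Y := by rw [cutCap_mapCap, hpre, hA]
  · refine le_minCut _ (hdisj.mono_right (Finset.image_subset_image hXA)) fun B hXB hYB => ?_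
    rw [cutCap_mapCap]
    apply minCut_le_cutCap
    · intro x hx
      simpa using hXB (Finset.mem_image_of_mem φ hx)
    · refine Finset.disjoint_left.mpr fun y hy hyB => ?_
      simp only [Finset.mem_filter, Finset.mem_univ, true_and] at hyB
      exact Finset.disjoint_left.mp hYB (Finset.mem_image_of_mem φ hy) hyB

end Contraction

section ExternalFlow

variable {V : Type} [DecidableEq V] {k : ℕ} {q : Fin k → V}

lemma image_subset_and_disjoint_iff (hq : Function.Injective q) {S : Finset (Fin k)}
    {A : Finset V} :
    S.image q ⊆ A ∧ Disjoint (Sᶜ.image q) A ↔ A.preimage q hq.injOn = S := by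
  constructor
  · rintro ⟨hSA, hTA⟩
    ext i
    rw [Finset.mem_preimage]
    refine ⟨fun hi => ?_, fun hi => hSA (Finset.mem_image_of_mem q hi)⟩
    by_contra hiS
    exact Finset.disjoint_left.mp hTA
      (Finset.mem_image_of_mem q (Finset.mem_compl.mpr hiS)) hi
  · rintro rfl
    constructor
    · intro v hv
      obtain ⟨i, hi, rfl⟩ := Finset.mem_image.mp hv
      exact Finset.mem_preimage.mp hi
    · refine Finset.disjoint_left.mpr fun v hv hvA => ?_
      obtain ⟨i, hi, rfl⟩ := Finset.mem_image.mp hv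
      exact Finset.mem_compl.mp hi (Finset.mem_preimage.mpr hvA)

variable [Fintype V]

theorem exists_isExtFlow_iff {c : V → V → ℝ} (hc : ∀ u v, 0 ≤ c u v)
    (hq : Function.Injective q) (x : Fin k → ℝ) :
    (∃ f, IsExtFlow c f q x) ↔ ∑ i, x i = 0 ∧
      ∀ S : Finset (Fin k), S.Nonempty → S ≠ univ →
        ∑ i ∈ S, x i ≤ minCut c (S.image q) (Sᶜ.image q) := by
  constructor
  · rintro ⟨f, hf, hzero, hterm⟩
    have hsum : ∀ A, ∑ v ∈ A, netOut f v = ∑ i ∈ A.preimage q hq.injOn, x i := fun A => by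
      rw [← Finset.sum_preimage q A hq.injOn _ fun v _ hv => hzero v fun i hi => hv ⟨i, hi⟩]
      simp only [hterm]
    refine ⟨by simpa [sum_netOut] using (hsum univ).symm, fun S _ _ => ?_⟩
    refine le_minCut c ((Finset.disjoint_image hq).mpr disjoint_compl_left) fun A hSA hTA => ?_
    rw [← (image_subset_and_disjoint_iff hq).mp ⟨hSA, hTA⟩, ← hsum]
    exact sum_netOut_le_cutCap hf A
  · rintro ⟨hx, hcut⟩
    set y := Function.extend q x (0 : V → ℝ)
    have hy : ∀ A, ∑ v ∈ A, y v = ∑ i ∈ A.preimage q hq.injOn, x i := fun A => by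
      rw [← Finset.sum_preimage q A hq.injOn y fun v _ hv => Function.extend_apply' x (0 : V → ℝ) v hv]
      simp only [y, hq.extend_apply]
    have hycut : ∀ A, ∑ v ∈ A, y v ≤ cutCap c A := fun A => by
      rw [hy]
      obtain ⟨hSA, hTA⟩ := (image_subset_and_disjoint_iff hq (A := A)).mpr rfl
      set S := A.preimage q hq.injOn
      rcases S.eq_empty_or_nonempty with hS | hS
      · rw [hS, Finset.sum_empty]
        exact cutCap_nonneg hc A
      by_cases hSu : S = univ
      · rw [hSu, hx]
        exact cutCap_nonneg hc A
      exact (hcut S hS hSu).trans (minCut_le_cutCap c hSA hTA)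
    obtain ⟨f, hf, hnet⟩ := exists_isFeasible_netOut_eq hc (by simpa [hy] using hx) hycut
    refine ⟨f, hf, fun v hv => ?_, fun i => ?_⟩
    · rw [hnet]
      exact Function.extend_apply' _ _ _ fun ⟨i, hi⟩ => hv i hi
    · rw [hnet]
      exact hq.extend_apply x (0 : V → ℝ) i

end ExternalFlow

section ProperSubsets

variable (α : Type) [Fintype α] [DecidableEq α]

lemma card_subtype_nonempty_ne_univ :
    Fintype.card {S : Finset α // S.Nonempty ∧ S ≠ univ} = 2 ^ Fintype.card α - 2 := by
  rw [Fintype.card_subtype]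
  rcases isEmpty_or_nonempty α with hα | hα
  · rw [Fintype.card_eq_zero, Finset.card_eq_zero.mpr
      (Finset.filter_eq_empty_iff.mpr fun S _ h => hα.elim h.1.choose)]
    rfl
  · have h : (Finset.univ.filter fun S : Finset α => S.Nonempty ∧ S ≠ univ) =
        (univ.erase ∅).erase univ := by
      ext S
      simp [Finset.nonempty_iff_ne_empty, and_comm]
    rw [h, Finset.card_erase_of_mem (by simp [Finset.univ_nonempty.ne_empty]),
      Finset.card_erase_of_mem (Finset.mem_univ _), Finset.card_univ, Fintype.card_finset]
    omega

lemma injective_decide_mem : Function.Injective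
    fun (i : α) (S : {S : Finset α // S.Nonempty ∧ S ≠ univ}) => decide (i ∈ S.1) := by
  intro i j hij
  by_contra hne
  have hsingle : ({i} : Finset α) ≠ univ := fun h =>
    hne (Finset.mem_singleton.mp (h ▸ Finset.mem_univ j)).symm
  simpa [eq_comm, hne] using congrFun hij ⟨{i}, Finset.singleton_nonempty i, hsingle⟩

end ProperSubsets

theorem stmt11 {V : Type} [Fintype V] [DecidableEq V] {k : ℕ} (c : V → V → ℝ)
    (hc : ∀ u v, 0 ≤ c u v) (q : Fin k → V) (hq : Function.Injective q) :
    ∃ (W : Type) (_ : Fintype W) (_ : DecidableEq W)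
      (d : W → W → ℝ) (q' : Fin k → W),
      Fintype.card W ≤ 2 ^ (2 ^ k - 2) ∧
      (∀ u v, 0 ≤ d u v) ∧ Function.Injective q' ∧
      (∀ S : Finset (Fin k), S.Nonempty → S ≠ Finset.univ →
        minCut d (S.image q') (Sᶜ.image q') = minCut c (S.image q) (Sᶜ.image q)) ∧
      (∀ x : Fin k → ℝ, (∃ f, IsExtFlow c f q x) ↔ ∃ g, IsExtFlow d g q' x) := by
  choose A hSA hTA hA using fun S : {S : Finset (Fin k) // S.Nonempty ∧ S ≠ univ} =>
    exists_cutCap_eq_minCut c ((Finset.disjoint_image hq).mpr (disjoint_compl_left (a := S.1)))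
  -- `W` has a vertex for every sign pattern; patterns taken by no vertex of `G` stay isolated.
  let φ : V → ({S : Finset (Fin k) // S.Nonempty ∧ S ≠ univ} → Bool) :=
    fun v S => decide (v ∈ A S)
  have hφq : φ ∘ q = fun i S => decide (i ∈ S.1) := by
    ext i S
    have hpre := (image_subset_and_disjoint_iff hq).mp ⟨hSA S, hTA S⟩
    simp only [φ, Function.comp_apply, ← hpre, Finset.mem_preimage]
  have hq' : Function.Injective (φ ∘ q) := hφq ▸ injective_decide_mem (Fin k)
  have hMC : ∀ S : Finset (Fin k), S.Nonempty → S ≠ univ →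
      minCut (mapCap φ c) (S.image (φ ∘ q)) (Sᶜ.image (φ ∘ q)) =
        minCut c (S.image q) (Sᶜ.image q) := fun S hS hSu => by
    rw [← Finset.image_image, ← Finset.image_image]
    exact minCut_mapCap_image φ c (hSA ⟨S, hS, hSu⟩) (hTA ⟨S, hS, hSu⟩) (hA ⟨S, hS, hSu⟩)
      fun u v huv hu => (decide_eq_decide.mp (congrFun huv ⟨S, hS, hSu⟩)).mp hu
  refine ⟨_, inferInstance, inferInstance, mapCap φ c, φ ∘ q, ?_, mapCap_nonneg φ hc, hq', hMC,
    fun x => ?_⟩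
  · rw [Fintype.card_fun, Fintype.card_bool, card_subtype_nonempty_ne_univ, Fintype.card_fin]
  · rw [exists_isExtFlow_iff hc hq, exists_isExtFlow_iff (mapCap_nonneg φ hc) hq']
    exact and_congr_right fun _ => forall₃_congr fun S hS hSu => by rw [hMC S hS hSu]
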